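/- Let n ∈ ℕ with n ≥ 1, let γ ∈ ℝ and let c ∈ ℝⁿ with c ≠ 0. Then the point u* = max{0, ‖c‖₂ − γ} · (c / ‖c‖₂) is the unique global minimizer over ℝⁿ of the function f(u) = γ‖u‖₂ + ½‖u − c‖₂². -/
import Mathlib

open RealInnerProductSpace

/-- For `γ ∈ ℝ`, `c ∈ ℝⁿ` with `c ≠ 0`, the point
`u* = max{0, ‖c‖ − γ} • (c / ‖c‖)` is the unique global minimizer of
`f(u) = γ‖u‖ + ½‖u − c‖²`. -/
theorem soft_thresholding_unique_global_minimizer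
    (n : ℕ) (hn : 1 ≤ n) (γ : ℝ) (c : EuclideanSpace ℝ (Fin n)) (hc : c ≠ 0) :
    (∀ u : EuclideanSpace ℝ (Fin n),
      γ * ‖(max 0 (‖c‖ - γ)) • (‖c‖⁻¹ • c)‖
        + 2⁻¹ * ‖(max 0 (‖c‖ - γ)) • (‖c‖⁻¹ • c) - c‖ ^ 2
      ≤ γ * ‖u‖ + 2⁻¹ * ‖u - c‖ ^ 2) ∧
    (∀ u : EuclideanSpace ℝ (Fin n), u ≠ (max 0 (‖c‖ - γ)) • (‖c‖⁻¹ • c) →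
      γ * ‖(max 0 (‖c‖ - γ)) • (‖c‖⁻¹ • c)‖
        + 2⁻¹ * ‖(max 0 (‖c‖ - γ)) • (‖c‖⁻¹ • c) - c‖ ^ 2
      < γ * ‖u‖ + 2⁻¹ * ‖u - c‖ ^ 2) := by
  have hk0 : (0:ℝ) < ‖c‖ := norm_pos_iff.mpr hc
  set k := ‖c‖ with hkdef
  set t := max 0 (k - γ) with htdef
  have ht0 : 0 ≤ t := le_max_left _ _
  set u₀ : EuclideanSpace ℝ (Fin n) := t • (k⁻¹ • c) with hu₀
  have hnorm₀ : ‖u₀‖ = t := by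
    rw [hu₀, norm_smul, norm_smul, norm_inv, Real.norm_eq_abs, Real.norm_eq_abs,
      abs_of_nonneg ht0, abs_of_pos hk0, ← hkdef, inv_mul_cancel₀ hk0.ne', mul_one]
  have hinner₀ : ⟪u₀, c⟫ = t * k := by
    rw [hu₀, real_inner_smul_left, real_inner_smul_left, real_inner_self_eq_norm_sq, ← hkdef]
    field_simp
  have hstrict : ∀ u : EuclideanSpace ℝ (Fin n), u ≠ u₀ →
      γ * ‖u₀‖ + 2⁻¹ * ‖u₀ - c‖ ^ 2 < γ * ‖u‖ + 2⁻¹ * ‖u - c‖ ^ 2 := by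
    intro u hu
    have e1 : ‖u - c‖ ^ 2 = ‖u‖ ^ 2 - 2 * ⟪u, c⟫ + k ^ 2 := norm_sub_sq_real u c
    have e0 : ‖u₀ - c‖ ^ 2 = t ^ 2 - 2 * (t * k) + k ^ 2 := by
      rw [norm_sub_sq_real, hnorm₀, hinner₀]
    rw [e0, e1, hnorm₀]
    have hCS : ⟪u, c⟫ ≤ ‖u‖ * k := real_inner_le_norm u c
    rcases eq_or_ne ‖u‖ t with hr | hr
    · -- norms equal, strict Cauchy–Schwarz
      have ht : 0 < t := by
        rcases ht0.lt_or_eq with h | h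
        · exact h
        · exfalso
          apply hu
          have : ‖u‖ = 0 := by rw [hr, ← h]
          rw [norm_eq_zero] at this
          rw [this, hu₀, ← h]
          simp
      have hne : k • u ≠ ‖u‖ • c := by
        intro h
        apply hu
        have : u = (k⁻¹ * ‖u‖) • c := by
          have := congrArg (fun v => k⁻¹ • v) h
          simpa [smul_smul, inv_mul_cancel₀ hk0.ne'] using this
        rw [this, hr, hu₀, smul_smul, mul_comm]
      have hlt : ⟪u, c⟫ < ‖u‖ * k := inner_lt_norm_mul_iff_real.mpr hne
      rw [hr] at hlt ⊢
      nlinarith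
    · rcases le_or_gt γ k with h | h
      · have ht : t = k - γ := max_eq_right (by linarith)
        have h2 : 0 < (‖u‖ - t) ^ 2 := by
          rcases (sub_ne_zero.mpr hr).lt_or_gt with h' | h' <;> nlinarith
        nlinarith [h2]
      · have ht : t = 0 := max_eq_left (by linarith)
        have hr' : 0 < ‖u‖ := (norm_nonneg u).lt_of_ne (by rw [ht] at hr; exact Ne.symm hr)
        nlinarith
  refine ⟨fun u => ?_, hstrict⟩
  rcases eq_or_ne u u₀ with h | h
  · rw [h]
  · exact (hstrict u h).le
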